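/- For every BDM state s ∈ S there is exactly one finite path of feasible transitions s_0 = u_0 → u_1 → ⋯ → u_k = s whose actions all lie in {D, I, N_=, d_−, b_+} (i.e., which avoids actions of type N_<) and which visits the initial state s_0 only as its first state (for s = s_0 this is the empty path). -/

import Mathlib

open scoped Classical ENNReal
open Filter

namespace BDM

/-- Augmented BDM state set `S̄`: batteries `b 1, …, b M` (entries outside `{1,…,M}`
are fixed to `0`), drain `d`, time residue `T`, ministep `t ∈ {1,…,M+1}`, and the
invariant `d + T + ∑ b_m = 0`. -/
structure St (M : ℕ) where
  b : ℕ → ℤ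
  d : ℤ
  T : ℤ
  t : ℕ
  ht1 : 1 ≤ t
  ht2 : t ≤ M + 1
  hb0 : ∀ m, m = 0 ∨ M < m → b m = 0
  inv : d + T + ∑ m ∈ Finset.range M, b (m + 1) = 0

/-- Membership in the (restricted) state set `S`: `0 ≤ T ≤ M`. -/
def inS {M : ℕ} (s : St M) : Prop := 0 ≤ s.T ∧ s.T ≤ (M : ℤ)

/-- The initial state `s₀ = (0,…,0,0;0,M+1)`. -/
def init (M : ℕ) : St M where
  b := fun _ => 0
  d := 0
  T := 0
  t := M + 1
  ht1 := Nat.le_add_left 1 M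
  ht2 := le_refl _
  hb0 := fun _ _ => rfl
  inv := by simp

/-- The six actions of the BDM. -/
inductive Act : Type
  | D | I | Ne | Nl | dm | bp
deriving DecidableEq

/-- Feasible transitions of the BDM. -/
def Step {M : ℕ} (s : St M) : Act → St M → Prop
  | .D, s' => s.t ≤ M ∧ s.d < s.b s.t ∧ s'.t = s.t + 1 ∧ s'.T = s.T ∧
      s'.d = s.b s.t ∧ s'.b = Function.update s.b s.t s.d
  | .I, s' => s.t ≤ M ∧ s.d < s.b s.t ∧ s'.t = s.t + 1 ∧ s'.T = s.T ∧
      s'.d = s.d ∧ s'.b = s.b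
  | .Ne, s' => s.t ≤ M ∧ s.b s.t = s.d ∧ s'.t = s.t + 1 ∧ s'.T = s.T ∧
      s'.d = s.d ∧ s'.b = s.b
  | .Nl, s' => s.t ≤ M ∧ s.b s.t < s.d ∧ s'.t = s.t + 1 ∧ s'.T = s.T ∧
      s'.d = s.d ∧ s'.b = s.b
  | .dm, s' => s.t = M + 1 ∧ s.T < M ∧ s'.t = 1 ∧ s'.T = s.T + 1 ∧
      s'.d = s.d - 1 ∧ s'.b = s.b
  | .bp, s' => s.t = M + 1 ∧ s.T = M ∧ s'.t = 1 ∧ s'.T = 0 ∧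
      s'.d = s.d ∧ s'.b = fun m => if 1 ≤ m ∧ m ≤ M then s.b m + 1 else 0

/-- The `(M+1)`-tuple `(b_1,…,b_{t−1},d,b_t,…,b_M)` as a list. -/
def tuple {M : ℕ} (s : St M) : List ℤ :=
  ((List.range M).map (fun m => s.b (m + 1))).insertIdx (s.t - 1) s.d

/-- One transposition of adjacent entries of a list. -/
def AdjSwap (l l' : List ℤ) : Prop :=
  ∃ l₁ x y l₂, l = l₁ ++ x :: y :: l₂ ∧ l' = l₁ ++ y :: x :: l₂

/-- The set of numbers `n` such that `l` can be sorted into nonincreasing order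
by `n` transpositions of adjacent entries. -/
def SortCost (l : List ℤ) : Set ℕ :=
  {n | ∃ f : ℕ → List ℤ, f 0 = l ∧ (∀ i < n, AdjSwap (f i) (f (i + 1))) ∧
        (f n).Pairwise (· ≥ ·)}

/-- `π_l`: the minimal number of adjacent transpositions needed to sort `l`
into nonincreasing order. -/
noncomputable def piMin (l : List ℤ) : ℕ := sInf (SortCost l)

/-- The nonincreasing rearrangement of a list. -/
def sortedTuple (l : List ℤ) : List ℤ := l.insertionSort (· ≥ ·)

/-- The class `K(s) = −π_s + M·T + 2·∑_{m=1}^{M+1} b̃_m·(M+1−m)`. -/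
noncomputable def Kc {M : ℕ} (s : St M) : ℤ :=
  -(piMin (tuple s) : ℤ) + (M : ℤ) * s.T +
    2 * ∑ i ∈ Finset.range (M + 1), (sortedTuple (tuple s)).getD i 0 * ((M : ℤ) - i)

/-- The transition matrix `𝒯(s,s')` of the BDM, with values in `ℝ≥0∞`. -/
noncomputable def Tmat (M q : ℕ) (s s' : St M) : ℝ≥0∞ :=
  if Step s .D s' then ((q : ℝ≥0∞) - 1) / q
  else if Step s .I s' then 1 / q
  else if (Step s .Ne s' ∨ Step s .Nl s' ∨ Step s .dm s' ∨ Step s .bp s') then 1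
  else 0

/-- The state set `S` as a subtype. -/
def SS (M : ℕ) : Type := {s : St M // inS s}

/-- The mass distributions `μ_τ` on `S`: `μ_0` is the point mass at `s₀` and
`μ_{τ+1}(s') = ∑_{s∈S} 𝒯(s,s')·μ_τ(s)`. -/
noncomputable def mu (M q : ℕ) : ℕ → SS M → ℝ≥0∞
  | 0, s => if s.1 = init M then 1 else 0
  | τ + 1, s' => ∑' s : SS M, Tmat M q s.1 s'.1 * mu M q τ s

/-- The asymptotic measure `μ_∞(s) = limsup_{τ→∞} μ_τ(s)`. -/
noncomputable def muInf (M q : ℕ) (s : SS M) : ℝ≥0∞ :=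
  Filter.atTop.limsup (fun τ => mu M q τ s)

end BDM

namespace BDM

/-- `Chain s L s'`: the list of actions `L` gives a finite path of feasible
transitions from `s` to `s'`. -/
inductive Chain {M : ℕ} : St M → List Act → St M → Prop
  | nil (s : St M) : Chain s [] s
  | cons {s u s' : St M} {α : Act} {L : List Act} :
      Step s α u → Chain u L s' → Chain s (α :: L) s'

end BDM

namespace BDM

variable {M : ℕ}

/-! ### Basic structure lemmas -/

lemma St.ext' {s s' : St M} (hb : s.b = s'.b) (hd : s.d = s'.d)
    (hT : s.T = s'.T) (ht : s.t = s'.t) : s = s' := by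
  obtain ⟨b, d, T, t, h1, h2, h3, h4⟩ := s
  obtain ⟨b', d', T', t', h1', h2', h3', h4'⟩ := s'
  simp only at hb hd hT ht
  subst hb; subst hd; subst hT; subst ht
  rfl

lemma step_det {s u u' : St M} {α : Act} (h : Step s α u) (h' : Step s α u') :
    u = u' := by
  cases α <;>
    (obtain ⟨a1, a2, a3, a4, a5, a6⟩ := h; obtain ⟨b1, b2, b3, b4, b5, b6⟩ := h';
     exact St.ext' (a6.trans b6.symm) (a5.trans b5.symm) (a4.trans b4.symm)
       (a3.trans b3.symm))

lemma chain_det : ∀ {L : List Act} {s u u' : St M},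
    Chain s L u → Chain s L u' → u = u' := by
  intro L
  induction L with
  | nil => intro s u u' h h'; cases h; cases h'; rfl
  | cons α L ih =>
    intro s u u' h h'
    cases h with
    | cons hst hch =>
      cases h' with
      | cons hst' hch' =>
        have := step_det hst hst'
        subst this
        exact ih hch hch'

lemma chain_concat : ∀ {L : List Act} {s s' : St M} {α : Act},
    Chain s (L ++ [α]) s' ↔ ∃ u, Chain s L u ∧ Step u α s' := by
  intro L
  induction L with
  | nil =>
    intro s s' α
    constructor
    · intro h
      cases h with
      | cons hst hch => cases hch; exact ⟨s, Chain.nil s, hst⟩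
    · rintro ⟨u, hu, hst⟩
      cases hu
      exact Chain.cons hst (Chain.nil _)
  | cons β L ih =>
    intro s s' α
    constructor
    · intro h
      cases h with
      | cons hst hch =>
        obtain ⟨u, hu, hst'⟩ := ih.mp hch
        exact ⟨u, Chain.cons hst hu, hst'⟩
    · rintro ⟨u, hu, hst⟩
      cases hu with
      | cons hst' hch => exact Chain.cons hst' (ih.mpr ⟨u, hch, hst⟩)

lemma step_inS {s s' : St M} {α : Act} (hs : inS s) (h : Step s α s') : inS s' := by
  cases α <;> obtain ⟨a1, a2, a3, a4, a5, a6⟩ := h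
  · exact ⟨a4 ▸ hs.1, a4 ▸ hs.2⟩
  · exact ⟨a4 ▸ hs.1, a4 ▸ hs.2⟩
  · exact ⟨a4 ▸ hs.1, a4 ▸ hs.2⟩
  · exact ⟨a4 ▸ hs.1, a4 ▸ hs.2⟩
  · constructor
    · rw [a4]; linarith [hs.1]
    · rw [a4]; linarith [a2]
  · constructor
    · rw [a4]
    · rw [a4]; positivity

lemma init_inS : inS (init M) := ⟨le_refl 0, Int.natCast_nonneg M⟩

lemma chain_inS : ∀ {L : List Act} {s s' : St M}, inS s → Chain s L s' → inS s' := by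
  intro L s s' hs h
  induction h with
  | nil => exact hs
  | cons hst hch ih => exact ih (step_inS hs hst)

/-! ### The canonical predecessor -/

def predBp (s : St M) (h2 : s.T = 0) : St M where
  b := fun m => if 1 ≤ m ∧ m ≤ M then s.b m - 1 else 0
  d := s.d
  T := M
  t := M + 1
  ht1 := by omega
  ht2 := le_refl _
  hb0 := by
    intro m hm
    have h : ¬ (1 ≤ m ∧ m ≤ M) := by omega
    show (if 1 ≤ m ∧ m ≤ M then s.b m - 1 else 0) = 0
    rw [if_neg h]
  inv := by
    have h := s.inv
    have hc : ∀ i ∈ Finset.range M,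
        (if 1 ≤ i + 1 ∧ i + 1 ≤ M then s.b (i + 1) - 1 else 0) = s.b (i + 1) - 1 := by
      intro i hi
      rw [Finset.mem_range] at hi
      rw [if_pos (by omega)]
    rw [Finset.sum_congr rfl hc, Finset.sum_sub_distrib, Finset.sum_const,
      Finset.card_range]
    rw [h2] at h
    simp only [nsmul_eq_mul, mul_one]
    linarith

def predDm (s : St M) : St M where
  b := s.b
  d := s.d + 1
  T := s.T - 1
  t := M + 1
  ht1 := by omega
  ht2 := le_refl _
  hb0 := s.hb0
  inv := by have := s.inv; linarith

def predMini (s : St M) (h1 : 2 ≤ s.t) : St M where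
  b := s.b
  d := s.d
  T := s.T
  t := s.t - 1
  ht1 := by omega
  ht2 := by have := s.ht2; omega
  hb0 := s.hb0
  inv := s.inv

def predD (s : St M) (h1 : 2 ≤ s.t) : St M where
  b := Function.update s.b (s.t - 1) s.d
  d := s.b (s.t - 1)
  T := s.T
  t := s.t - 1
  ht1 := by omega
  ht2 := by have := s.ht2; omega
  hb0 := by
    intro m hm
    have h2 := s.ht2
    rw [Function.update_of_ne (by omega)]
    exact s.hb0 m hm
  inv := by
    have h2 := s.ht2
    have key : ∑ i ∈ Finset.range M,
        (Function.update s.b (s.t - 1) s.d (i + 1) - s.b (i + 1))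
        = s.d - s.b (s.t - 1) := by
      rw [Finset.sum_eq_single (s.t - 1 - 1)]
      · have : s.t - 1 - 1 + 1 = s.t - 1 := by omega
        rw [this, Function.update_self]
      · intro i hi hne
        rw [Function.update_of_ne (by omega), sub_self]
      · intro habs
        exact absurd (Finset.mem_range.mpr (by omega)) habs
    rw [Finset.sum_sub_distrib] at key
    have := s.inv
    linarith

@[simp] lemma predBp_b (s : St M) (h2) :
    (predBp s h2).b = fun m => if 1 ≤ m ∧ m ≤ M then s.b m - 1 else 0 := rfl
@[simp] lemma predBp_d (s : St M) (h2) : (predBp s h2).d = s.d := rfl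
@[simp] lemma predBp_T (s : St M) (h2) : (predBp s h2).T = M := rfl
@[simp] lemma predBp_t (s : St M) (h2) : (predBp s h2).t = M + 1 := rfl
@[simp] lemma predDm_b (s : St M) : (predDm s).b = s.b := rfl
@[simp] lemma predDm_d (s : St M) : (predDm s).d = s.d + 1 := rfl
@[simp] lemma predDm_T (s : St M) : (predDm s).T = s.T - 1 := rfl
@[simp] lemma predDm_t (s : St M) : (predDm s).t = M + 1 := rfl
@[simp] lemma predMini_b (s : St M) (h1) : (predMini s h1).b = s.b := rfl
@[simp] lemma predMini_d (s : St M) (h1) : (predMini s h1).d = s.d := rfl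
@[simp] lemma predMini_T (s : St M) (h1) : (predMini s h1).T = s.T := rfl
@[simp] lemma predMini_t (s : St M) (h1) : (predMini s h1).t = s.t - 1 := rfl
@[simp] lemma predD_b (s : St M) (h1) :
    (predD s h1).b = Function.update s.b (s.t - 1) s.d := rfl
@[simp] lemma predD_d (s : St M) (h1) : (predD s h1).d = s.b (s.t - 1) := rfl
@[simp] lemma predD_T (s : St M) (h1) : (predD s h1).T = s.T := rfl
@[simp] lemma predD_t (s : St M) (h1) : (predD s h1).t = s.t - 1 := rfl

def predSt (s : St M) : St M :=
  if h1 : s.t = 1 then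
    if h2 : s.T = 0 then predBp s h2 else predDm s
  else
    if s.d < s.b (s.t - 1) then predMini s (by have := s.ht1; omega)
    else if s.b (s.t - 1) = s.d then predMini s (by have := s.ht1; omega)
    else predD s (by have := s.ht1; omega)

def predAct (s : St M) : Act :=
  if s.t = 1 then (if s.T = 0 then .bp else .dm)
  else if s.d < s.b (s.t - 1) then .I
  else if s.b (s.t - 1) = s.d then .Ne
  else .D

lemma predAct_ne_Nl (s : St M) : predAct s ≠ Act.Nl := by
  unfold predAct
  split_ifs <;> simp

lemma pred_step (hM : 1 ≤ M) (s : St M) (hs : inS s) :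
    Step (predSt s) (predAct s) s := by
  have ht1 := s.ht1
  have ht2 := s.ht2
  unfold predSt predAct
  split_ifs with h1 h2 h3 h4
  · -- bp
    refine ⟨rfl, rfl, h1, h2, rfl, ?_⟩
    funext m
    by_cases hm : 1 ≤ m ∧ m ≤ M
    · rw [if_pos hm]
      simp only [predBp_b, if_pos hm]
      ring
    · rw [if_neg hm]
      exact s.hb0 m (by omega)
  · -- dm
    refine ⟨rfl, ?_, h1, ?_, ?_, rfl⟩
    · simp only [predDm_T]; linarith [hs.2]
    · simp only [predDm_T]; ring
    · simp only [predDm_d]; ring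
  · -- I
    refine ⟨by simp only [predMini_t]; omega, ?_, by simp only [predMini_t]; omega,
      rfl, rfl, rfl⟩
    simp only [predMini_b, predMini_d, predMini_t]
    exact h3
  · -- Ne
    refine ⟨by simp only [predMini_t]; omega, ?_, by simp only [predMini_t]; omega,
      rfl, rfl, rfl⟩
    simp only [predMini_b, predMini_d, predMini_t]
    exact h4
  · -- D
    have hlt : s.b (s.t - 1) < s.d := by
      rcases lt_trichotomy (s.b (s.t - 1)) s.d with h | h | h
      · exact h
      · exact absurd h h4
      · exact absurd h h3
    refine ⟨by simp only [predD_t]; omega, ?_, by simp only [predD_t]; omega,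
      rfl, ?_, ?_⟩
    · simp only [predD_b, predD_d, predD_t, Function.update_self]
      exact hlt
    · simp only [predD_b, predD_t, Function.update_self]
    · simp only [predD_b, predD_d, predD_t]
      rw [Function.update_idem, Function.update_eq_self]

lemma pred_inS {s : St M} (hs : inS s) : inS (predSt s) := by
  unfold predSt
  split_ifs with h1 h2 h3 h4
  · exact ⟨by simp only [predBp_T]; exact Int.natCast_nonneg M, by simp only [predBp_T]; exact le_refl _⟩
  · constructor
    · simp only [predDm_T]
      have := hs.1
      omega
    · simp only [predDm_T]; linarith [hs.2]
  · exact hs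
  · exact hs
  · exact hs

lemma pred_unique (hM : 1 ≤ M) {u s : St M} {α : Act} (h : Step u α s)
    (hα : α ≠ Act.Nl) (huT : 0 ≤ u.T) :
    u = predSt s ∧ α = predAct s := by
  have hu1 := u.ht1
  have hu2 := u.ht2
  cases α with
  | Nl => exact absurd rfl hα
  | I =>
    obtain ⟨htM, hlt, ht, hT, hd, hb⟩ := h
    have h1 : ¬ s.t = 1 := by omega
    have hk : s.t - 1 = u.t := by omega
    have hlt' : s.d < s.b (s.t - 1) := by rw [hd, hb, hk]; exact hlt
    constructor
    · unfold predSt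
      rw [dif_neg h1, if_pos hlt']
      exact St.ext' hb.symm hd.symm hT.symm (by simp only [predMini_t]; omega)
    · unfold predAct
      rw [if_neg h1, if_pos hlt']
  | Ne =>
    obtain ⟨htM, heqc, ht, hT, hd, hb⟩ := h
    have h1 : ¬ s.t = 1 := by omega
    have hk : s.t - 1 = u.t := by omega
    have heq : s.b (s.t - 1) = s.d := by rw [hd, hb, hk]; exact heqc
    have hnlt : ¬ s.d < s.b (s.t - 1) := by rw [heq]; exact lt_irrefl _
    constructor
    · unfold predSt
      rw [dif_neg h1, if_neg hnlt, if_pos heq]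
      exact St.ext' hb.symm hd.symm hT.symm (by simp only [predMini_t]; omega)
    · unfold predAct
      rw [if_neg h1, if_neg hnlt, if_pos heq]
  | D =>
    obtain ⟨htM, hlt, ht, hT, hd, hb⟩ := h
    have h1 : ¬ s.t = 1 := by omega
    have hk : s.t - 1 = u.t := by omega
    have hsb : s.b (s.t - 1) = u.d := by rw [hb, hk, Function.update_self]
    have hnlt : ¬ s.d < s.b (s.t - 1) := by rw [hsb, hd]; exact not_lt.mpr hlt.le
    have hne : ¬ s.b (s.t - 1) = s.d := by rw [hsb, hd]; exact hlt.ne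
    constructor
    · unfold predSt
      rw [dif_neg h1, if_neg hnlt, if_neg hne]
      refine St.ext' ?_ hsb.symm hT.symm (by simp only [predD_t]; omega)
      simp only [predD_b]
      rw [hk, hb, hd, Function.update_idem, Function.update_eq_self]
    · unfold predAct
      rw [if_neg h1, if_neg hnlt, if_neg hne]
  | dm =>
    obtain ⟨htu, hTu, ht1, hT, hd, hb⟩ := h
    have h2 : ¬ s.T = 0 := by rw [hT]; intro hc; linarith
    constructor
    · unfold predSt
      rw [dif_pos ht1, dif_neg h2]
      exact St.ext' hb.symm (by simp only [predDm_d]; linarith) (by simp only [predDm_T]; linarith) htu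
    · unfold predAct
      rw [if_pos ht1, if_neg h2]
  | bp =>
    obtain ⟨htu, hTu, ht1, hT0, hd, hb⟩ := h
    constructor
    · unfold predSt
      rw [dif_pos ht1, dif_pos hT0]
      refine St.ext' ?_ hd.symm hTu htu
      funext m
      simp only [predBp_b]
      by_cases hm : 1 ≤ m ∧ m ≤ M
      · rw [if_pos hm, hb]
        simp only [if_pos hm]
        ring
      · rw [if_neg hm]
        exact u.hb0 m (by omega)
    · unfold predAct
      rw [if_pos ht1, if_pos hT0]

end BDM


namespace BDM

variable {M : ℕ}

/-! ### The potential function -/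

/-- The entries `d, b 1, …, b M` of the extended tuple. -/
def ent (s : St M) : ℕ → ℤ := fun i => if i = 0 then s.d else s.b i

lemma range_ne : (Finset.range (M + 1)).Nonempty :=
  ⟨0, Finset.mem_range.mpr (Nat.succ_pos M)⟩

/-- The maximum of `d, b 1, …, b M`. -/
def mx (s : St M) : ℤ := (Finset.range (M + 1)).sup' range_ne (ent s)

lemma ent_zero (s : St M) : ent s 0 = s.d := by unfold ent; rw [if_pos rfl]

lemma ent_ne_zero (s : St M) {m : ℕ} (h : m ≠ 0) : ent s m = s.b m := by
  unfold ent; rw [if_neg h]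

lemma mx_ge_d (s : St M) : s.d ≤ mx s := by
  have h : ent s 0 ≤ mx s :=
    Finset.le_sup' (ent s) (Finset.mem_range.mpr (Nat.succ_pos M))
  rwa [ent_zero] at h

lemma mx_ge_b (s : St M) {m : ℕ} (h1 : 1 ≤ m) (h2 : m ≤ M) : s.b m ≤ mx s := by
  have h : ent s m ≤ mx s :=
    Finset.le_sup' (ent s) (Finset.mem_range.mpr (by omega))
  rwa [ent_ne_zero s (by omega)] at h

lemma mx_le {s : St M} {c : ℤ} (hd : s.d ≤ c)
    (hb : ∀ m, 1 ≤ m → m ≤ M → s.b m ≤ c) : mx s ≤ c := by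
  apply Finset.sup'_le
  intro i hi
  rw [Finset.mem_range] at hi
  unfold ent
  split_ifs with h
  · exact hd
  · exact hb i (by omega) (by omega)

lemma mx_cases (s : St M) :
    mx s = s.d ∨ ∃ m, 1 ≤ m ∧ m ≤ M ∧ mx s = s.b m := by
  obtain ⟨i, hi, hval⟩ := Finset.exists_mem_eq_sup' (range_ne (M := M)) (ent s)
  rw [Finset.mem_range] at hi
  have hval' : mx s = ent s i := hval
  by_cases h : i = 0
  · left; rw [hval', h, ent_zero]
  · right; exact ⟨i, by omega, by omega, by rw [hval', ent_ne_zero s h]⟩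

lemma sum_ent (s : St M) : ∑ i ∈ Finset.range (M + 1), ent s i = -s.T := by
  rw [Finset.sum_range_succ']
  have hc : ∀ i ∈ Finset.range M, ent s (i + 1) = s.b (i + 1) := by
    intro i _; simp [ent]
  rw [Finset.sum_congr rfl hc, ent_zero]
  have := s.inv
  linarith

lemma mx_nonneg {s : St M} (hs : inS s) : 0 ≤ mx s := by
  by_contra hneg
  push_neg at hneg
  have hsum : ∑ i ∈ Finset.range (M + 1), ent s i
      ≤ ∑ _i ∈ Finset.range (M + 1), (-1 : ℤ) := by
    apply Finset.sum_le_sum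
    intro i hi
    have := Finset.le_sup' (f := ent s) (b := i) hi
    have h2 : mx s ≤ -1 := by omega
    exact le_trans this h2
  rw [sum_ent, Finset.sum_const, Finset.card_range, nsmul_eq_mul] at hsum
  have h2 := hs.2
  push_cast at hsum
  linarith

/-- The condition under which one extra `b₊` action is still "owed". -/
def ChiCond (s : St M) : Prop :=
  (∀ m, 1 ≤ m → m < s.t → s.d ≤ s.b m) ∧ (∀ m, 1 ≤ m → m ≤ M → s.b m ≤ s.d)

noncomputable def chi (s : St M) : ℤ := if ChiCond s then 1 else 0

lemma chi_nonneg (s : St M) : 0 ≤ chi s := by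
  unfold chi; split_ifs <;> norm_num

/-- The potential: the length of the unique path from `s₀` to `s`. -/
noncomputable def Phi (s : St M) : ℤ :=
  ((mx s + chi s) * (M + 1) + s.T) * (M + 1) + s.t - (M + 1)

lemma phi_nonneg (hM : 1 ≤ M) {s : St M} (hs : inS s) : 0 ≤ Phi s := by
  have hmx := mx_nonneg hs
  have hchi0 := chi_nonneg s
  have ht1 := s.ht1
  have ht2 := s.ht2
  have hT0 := hs.1
  have htc : (1 : ℤ) ≤ (s.t : ℤ) := by exact_mod_cast ht1
  have hMc : (1 : ℤ) ≤ (M : ℤ) := by exact_mod_cast hM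
  by_cases hB : mx s + chi s = 0
  · have hchi : chi s = 0 := by omega
    have hmx0 : mx s = 0 := by omega
    have hT1 : 1 ≤ s.T := by
      by_contra hT
      have hT' : s.T = 0 := by omega
      have hz : ∀ i ∈ Finset.range (M + 1), ent s i = 0 := by
        apply (Finset.sum_eq_zero_iff_of_nonpos ?_).mp
        · rw [sum_ent, hT']; ring
        · intro i hi
          have h2 : ent s i ≤ mx s := Finset.le_sup' (ent s) hi
          omega
      have hd0 : s.d = 0 := by
        have := hz 0 (Finset.mem_range.mpr (Nat.succ_pos M))
        rwa [ent_zero] at this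
      have hb0 : ∀ m, 1 ≤ m → m ≤ M → s.b m = 0 := by
        intro m hma hmb
        have := hz m (Finset.mem_range.mpr (by omega))
        rwa [ent_ne_zero s (by omega)] at this
      have hcond : ChiCond s := by
        constructor
        · intro m hma hmb
          rw [hd0, hb0 m hma (by omega)]
        · intro m hma hmb
          rw [hd0, hb0 m hma hmb]
      have : chi s = 1 := by unfold chi; rw [if_pos hcond]
      omega
    have h5 : ((mx s + chi s) * (M + 1) + s.T) * (M + 1) = s.T * (M + 1) := by
      rw [hB]; ring
    unfold Phi
    rw [h5]
    nlinarith
  · have hB1 : 1 ≤ mx s + chi s := by omega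
    unfold Phi
    nlinarith [mul_le_mul_of_nonneg_right
      (mul_le_mul_of_nonneg_right hB1 (by linarith : (0:ℤ) ≤ (M:ℤ) + 1))
      (by linarith : (0:ℤ) ≤ (M:ℤ) + 1), hs.1]

end BDM


namespace BDM

variable {M : ℕ}

/-! ### Φ decreases along the canonical predecessor -/

lemma mx_predMini (s : St M) (h : 2 ≤ s.t) : mx (predMini s h) = mx s := rfl

lemma chi_predMini (s : St M) (h : 2 ≤ s.t) (hge : s.d ≤ s.b (s.t - 1)) :
    chi (predMini s h) = chi s := by
  unfold chi
  apply if_congr _ rfl rfl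
  constructor
  · rintro ⟨c1, c2⟩
    refine ⟨?_, c2⟩
    intro m hma hmb
    by_cases hmk : m = s.t - 1
    · subst hmk; exact hge
    · have := c1 m hma (by simp only [predMini_t]; omega)
      exact this
  · rintro ⟨c1, c2⟩
    refine ⟨?_, c2⟩
    intro m hma hmb
    simp only [predMini_t] at hmb
    exact c1 m hma (by omega)

lemma phi_predMini (s : St M) (h : 2 ≤ s.t) (hge : s.d ≤ s.b (s.t - 1)) :
    Phi (predMini s h) < Phi s := by
  unfold Phi
  rw [mx_predMini, chi_predMini s h hge]
  simp only [predMini_T, predMini_t]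
  have hcast : ((s.t - 1 : ℕ) : ℤ) = (s.t : ℤ) - 1 := by omega
  rw [hcast]
  linarith

lemma mx_predD (s : St M) (h : 2 ≤ s.t) (hk2 : s.t - 1 ≤ M) :
    mx (predD s h) = mx s := by
  have hk1 : 1 ≤ s.t - 1 := by omega
  apply le_antisymm
  · apply mx_le
    · simp only [predD_d]; exact mx_ge_b s hk1 hk2
    · intro m hma hmb
      simp only [predD_b]
      by_cases hmk : m = s.t - 1
      · subst hmk; rw [Function.update_self]; exact mx_ge_d s
      · rw [Function.update_of_ne hmk]; exact mx_ge_b s hma hmb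
  · apply mx_le
    · have h2 := mx_ge_b (predD s h) hk1 hk2
      simp only [predD_b, Function.update_self] at h2
      exact h2
    · intro m hma hmb
      by_cases hmk : m = s.t - 1
      · subst hmk
        have h2 := mx_ge_d (predD s h)
        simp only [predD_d] at h2
        exact h2
      · have h2 := mx_ge_b (predD s h) hma hmb
        simp only [predD_b, Function.update_of_ne hmk] at h2
        exact h2

lemma phi_predD (s : St M) (h : 2 ≤ s.t) (hk2 : s.t - 1 ≤ M)
    (hlt : s.b (s.t - 1) < s.d) : Phi (predD s h) < Phi s := by
  have hk1 : 1 ≤ s.t - 1 := by omega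
  have hchis : chi s = 0 := by
    unfold chi
    rw [if_neg]
    rintro ⟨c1, c2⟩
    have := c1 (s.t - 1) hk1 (by omega)
    linarith
  have hchiu : chi (predD s h) = 0 := by
    unfold chi
    rw [if_neg]
    rintro ⟨c1, c2⟩
    have h2 := c2 (s.t - 1) hk1 hk2
    simp only [predD_b, predD_d, Function.update_self] at h2
    linarith
  unfold Phi
  rw [mx_predD s h hk2, hchis, hchiu]
  simp only [predD_T, predD_t]
  have hcast : ((s.t - 1 : ℕ) : ℤ) = (s.t : ℤ) - 1 := by omega
  rw [hcast]
  linarith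

lemma chi_eq_one_of_all (s : St M) (h1 : s.t = 1)
    (hall : ∀ m, 1 ≤ m → m ≤ M → s.b m ≤ s.d) : chi s = 1 := by
  unfold chi
  rw [if_pos]
  exact ⟨fun m hma hmb => absurd hmb (by omega), hall⟩

lemma chi_eq_zero_of_gt (s : St M) {m₀ : ℕ} (hm1 : 1 ≤ m₀) (hm2 : m₀ ≤ M)
    (hgt : s.d < s.b m₀) : chi s = 0 := by
  unfold chi
  rw [if_neg]
  rintro ⟨c1, c2⟩
  exact absurd (c2 m₀ hm1 hm2) (not_le.mpr hgt)

lemma mx_eq_d_of_all (s : St M)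
    (hall : ∀ m, 1 ≤ m → m ≤ M → s.b m ≤ s.d) : mx s = s.d :=
  le_antisymm (mx_le (le_refl _) hall) (mx_ge_d s)

lemma phi_predBp (hM : 1 ≤ M) (s : St M) (hs : inS s) (h1 : s.t = 1)
    (h2 : s.T = 0) : Phi (predBp s h2) < Phi s := by
  have hMc : (1 : ℤ) ≤ (M : ℤ) := by exact_mod_cast hM
  by_cases hall : ∀ m, 1 ≤ m → m ≤ M → s.b m ≤ s.d
  · have hmxs := mx_eq_d_of_all s hall
    have hchis := chi_eq_one_of_all s h1 hall
    have hmxu : mx (predBp s h2) = s.d := by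
      apply le_antisymm
      · apply mx_le
        · simp only [predBp_d, le_refl]
        · intro m hma hmb
          simp only [predBp_b]
          rw [if_pos ⟨hma, hmb⟩]
          have := hall m hma hmb
          linarith
      · have := mx_ge_d (predBp s h2)
        simpa only [predBp_d] using this
    have hchiu : chi (predBp s h2) = 0 := by
      unfold chi
      rw [if_neg]
      rintro ⟨c1, c2⟩
      have hx := c1 1 (le_refl 1) (by simp only [predBp_t]; omega)
      simp only [predBp_b, predBp_d, if_pos (⟨le_refl 1, hM⟩ : 1 ≤ 1 ∧ 1 ≤ M)] at hx
      have := hall 1 (le_refl 1) hM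
      linarith
    unfold Phi
    rw [hmxs, hchis, hmxu, hchiu]
    simp only [predBp_T, predBp_t]
    rw [h1, h2]
    push_cast
    nlinarith
  · push_neg at hall
    obtain ⟨m₀, hm1, hm2, hm₀⟩ := hall
    have hchis := chi_eq_zero_of_gt s hm1 hm2 hm₀
    obtain hca | ⟨i, hi1, hi2, hival⟩ := mx_cases s
    · exact absurd (mx_ge_b s hm1 hm2) (by rw [hca]; exact not_le.mpr hm₀)
    have hmxu : mx (predBp s h2) = mx s - 1 := by
      apply le_antisymm
      · apply mx_le
        · simp only [predBp_d]
          have := mx_ge_b s hm1 hm2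
          linarith
        · intro m hma hmb
          simp only [predBp_b]
          rw [if_pos ⟨hma, hmb⟩]
          have := mx_ge_b s hma hmb
          linarith
      · have h3 := mx_ge_b (predBp s h2) hi1 hi2
        simp only [predBp_b, if_pos (⟨hi1, hi2⟩ : 1 ≤ i ∧ i ≤ M)] at h3
        linarith [hival.le, hival.ge]
    have hchiu : chi (predBp s h2) = 0 := by
      unfold chi
      rw [if_neg]
      rintro ⟨c1, c2⟩
      have hbm : ∀ m, 1 ≤ m → m ≤ M → s.b m = s.d + 1 := by
        intro m hma hmb
        have hx := c1 m hma (by simp only [predBp_t]; omega)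
        have hy := c2 m hma hmb
        simp only [predBp_b, predBp_d, if_pos (⟨hma, hmb⟩ : 1 ≤ m ∧ m ≤ M)] at hx hy
        linarith
      have hsum : ∑ i ∈ Finset.range M, s.b (i + 1) = (M : ℤ) * (s.d + 1) := by
        rw [Finset.sum_congr rfl
          (fun i hi => hbm (i + 1) (by omega)
            (by rw [Finset.mem_range] at hi; omega)),
          Finset.sum_const, Finset.card_range, nsmul_eq_mul]
      have hinv := s.inv
      rw [h2, hsum] at hinv
      rcases le_or_gt s.d (-1) with hsd | hsd
      · nlinarith
      · nlinarith
    unfold Phi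
    rw [hchis, hchiu, hmxu]
    simp only [predBp_T, predBp_t]
    rw [h1, h2]
    push_cast
    nlinarith

lemma phi_predDm (hM : 1 ≤ M) (s : St M) (hs : inS s) (h1 : s.t = 1)
    (h2 : ¬ s.T = 0) : predDm s = init M ∨ Phi (predDm s) < Phi s := by
  have hMc : (1 : ℤ) ≤ (M : ℤ) := by exact_mod_cast hM
  have hT1 : 1 ≤ s.T := by have := hs.1; omega
  by_cases hall : ∀ m, 1 ≤ m → m ≤ M → s.b m ≤ s.d
  · right
    have hmxs := mx_eq_d_of_all s hall
    have hchis := chi_eq_one_of_all s h1 hall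
    have hmxu : mx (predDm s) = s.d + 1 := by
      apply le_antisymm
      · apply mx_le
        · simp only [predDm_d, le_refl]
        · intro m hma hmb
          simp only [predDm_b]
          have := hall m hma hmb
          linarith
      · have := mx_ge_d (predDm s)
        simpa only [predDm_d] using this
    have hchiu : chi (predDm s) = 0 := by
      unfold chi
      rw [if_neg]
      rintro ⟨c1, c2⟩
      have hx := c1 1 (le_refl 1) (by simp only [predDm_t]; omega)
      simp only [predDm_b, predDm_d] at hx
      have := hall 1 (le_refl 1) hM
      linarith
    unfold Phi
    rw [hmxs, hchis, hmxu, hchiu]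
    simp only [predDm_T, predDm_t]
    rw [h1]
    push_cast
    nlinarith
  · push_neg at hall
    obtain ⟨m₀, hm1, hm2, hm₀⟩ := hall
    have hchis := chi_eq_zero_of_gt s hm1 hm2 hm₀
    obtain hca | ⟨i, hi1, hi2, hival⟩ := mx_cases s
    · exact absurd (mx_ge_b s hm1 hm2) (by rw [hca]; exact not_le.mpr hm₀)
    have hmxu : mx (predDm s) = mx s := by
      apply le_antisymm
      · apply mx_le
        · simp only [predDm_d]
          have := mx_ge_b s hm1 hm2
          linarith
        · intro m hma hmb
          simp only [predDm_b]
          exact mx_ge_b s hma hmb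
      · have h3 := mx_ge_b (predDm s) hi1 hi2
        simp only [predDm_b] at h3
        linarith [hival.le]
    by_cases hcond : ChiCond (predDm s)
    · left
      obtain ⟨c1, c2⟩ := hcond
      have hbm : ∀ m, 1 ≤ m → m ≤ M → s.b m = s.d + 1 := by
        intro m hma hmb
        have hx := c1 m hma (by simp only [predDm_t]; omega)
        have hy := c2 m hma hmb
        simp only [predDm_b, predDm_d] at hx hy
        linarith
      have hsum : ∑ i ∈ Finset.range M, s.b (i + 1) = (M : ℤ) * (s.d + 1) := by
        rw [Finset.sum_congr rfl
          (fun i hi => hbm (i + 1) (by omega)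
            (by rw [Finset.mem_range] at hi; omega)),
          Finset.sum_const, Finset.card_range, nsmul_eq_mul]
      have hinv := s.inv
      rw [hsum] at hinv
      have hTM := hs.2
      have hx0 : s.d + 1 = 0 := by
        rcases lt_trichotomy (s.d + 1) 0 with h | h | h
        · exfalso; nlinarith
        · exact h
        · exfalso; nlinarith
      have hsT : s.T = 1 := by nlinarith
      apply St.ext'
      · funext m
        simp only [predDm_b, init]
        by_cases hm : 1 ≤ m ∧ m ≤ M
        · rw [hbm m hm.1 hm.2]; linarith
        · exact s.hb0 m (by omega)
      · simp only [predDm_d, init]; linarith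
      · simp only [predDm_T, init]; linarith
      · simp only [predDm_t, init]
    · right
      have hchiu : chi (predDm s) = 0 := by unfold chi; rw [if_neg hcond]
      unfold Phi
      rw [hchis, hchiu, hmxu]
      simp only [predDm_T, predDm_t]
      rw [h1]
      push_cast
      nlinarith

lemma phi_pred (hM : 1 ≤ M) {s : St M} (hs : inS s) :
    predSt s = init M ∨ Phi (predSt s) < Phi s := by
  have ht1 := s.ht1
  have ht2 := s.ht2
  unfold predSt
  split_ifs with h1 h2 h3 h4
  · exact Or.inr (phi_predBp hM s hs h1 h2)
  · exact phi_predDm hM s hs h1 h2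
  · exact Or.inr (phi_predMini s _ h3.le)
  · exact Or.inr (phi_predMini s _ h4.ge)
  · exact Or.inr (phi_predD s _ (by omega) (by omega))

end BDM


namespace BDM

variable {M : ℕ}

/-! ### Paths from the initial state -/

/-- The path visits `s₀` only as its first state. -/
def NoRevisit (M : ℕ) (L : List Act) : Prop :=
  ∀ L₁ L₂ (u : St M), L = L₁ ++ L₂ → L₁ ≠ [] → Chain (init M) L₁ u → u ≠ init M

lemma noRevisit_nil : NoRevisit M [] := by
  intro L₁ L₂ u hdec hne _
  exact absurd (List.append_eq_nil_iff.mp hdec.symm).1 hne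

lemma noRevisit_prefix {L D : List Act} (h : NoRevisit M (L ++ D)) :
    NoRevisit M L := by
  intro L₁ L₂ u hdec hne hch
  exact h L₁ (L₂ ++ D) u (by rw [hdec, List.append_assoc]) hne hch

lemma noRevisit_snoc {C : List Act} {α : Act} {u s : St M}
    (hC : Chain (init M) C u) (hnr : NoRevisit M C)
    (hu : C = [] ∨ u ≠ init M) (hs : s ≠ init M) (hstep : Step u α s) :
    NoRevisit M (C ++ [α]) := by
  have hfull : Chain (init M) (C ++ [α]) s := chain_concat.mpr ⟨u, hC, hstep⟩
  intro L₁ L₂ v hdec hne hchain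
  rcases List.append_eq_append_iff.mp hdec with ⟨a', ha1, ha2⟩ | ⟨c', hc1, hc2⟩
  · -- ha1 : L₁ = C ++ a', ha2 : [α] = a' ++ L₂
    cases a' with
    | nil =>
      rw [List.append_nil] at ha1
      rcases hu with hC0 | hune
      · rw [ha1, hC0] at hne; exact absurd rfl hne
      · rw [ha1] at hchain
        rw [chain_det hC hchain] at hune
        exact hune
    | cons x xs =>
      simp only [List.cons_append] at ha2
      obtain ⟨hax, hnil⟩ := List.cons_eq_cons.mp ha2
      obtain ⟨hxs, hL2⟩ := List.append_eq_nil_iff.mp hnil.symm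
      subst hax; subst hxs
      rw [ha1] at hchain
      rw [chain_det hfull hchain] at hs
      exact hs
  · -- hc1 : C = L₁ ++ c'
    exact hnr L₁ c' v hc1 hne hchain

lemma exists_good (hM : 1 ≤ M) :
    ∀ n : ℕ, ∀ s : St M, inS s → Phi s ≤ (n : ℤ) →
      ∃ L, Chain (init M) L s ∧ Act.Nl ∉ L ∧ NoRevisit M L := by
  intro n
  induction n using Nat.strong_induction_on with
  | _ n ih =>
    intro s hs hphi
    by_cases hsi : s = init M
    · exact ⟨[], hsi ▸ Chain.nil (init M), by simp, noRevisit_nil⟩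
    have hstep := pred_step hM s hs
    have hact := predAct_ne_Nl s
    have huS := pred_inS hs
    rcases phi_pred hM hs with hpi | hlt
    · refine ⟨[predAct s], Chain.cons (hpi ▸ hstep) (Chain.nil s),
        by simpa [eq_comm] using hact, ?_⟩
      have h0 : ([] : List Act) ++ [predAct s] = [predAct s] := rfl
      rw [← h0]
      exact noRevisit_snoc (Chain.nil _) noRevisit_nil (Or.inl rfl) hsi
        (hpi ▸ hstep)
    · have hnn := phi_nonneg hM huS
      have hm : (Phi (predSt s)).toNat < n := by omega
      obtain ⟨C, hC, hCnl, hCnr⟩ := ih (Phi (predSt s)).toNat hm (predSt s) huS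
        (Int.self_le_toNat _)
      refine ⟨C ++ [predAct s], chain_concat.mpr ⟨predSt s, hC, hstep⟩, ?_, ?_⟩
      · simp only [List.mem_append, List.mem_singleton]
        rintro (h | h)
        · exact hCnl h
        · exact hact h.symm
      · apply noRevisit_snoc hC hCnr ?_ hsi hstep
        by_cases hpi : predSt s = init M
        · left
          by_contra hCne
          exact (hCnr C [] (predSt s) (List.append_nil C).symm hCne hC) hpi
        · exact Or.inr hpi

lemma chain_unique (hM : 1 ≤ M) :
    ∀ n : ℕ, ∀ L L' : List Act, ∀ s : St M, L.length ≤ n →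
      Chain (init M) L s → Act.Nl ∉ L → NoRevisit M L →
      Chain (init M) L' s → Act.Nl ∉ L' → NoRevisit M L' → L = L' := by
  intro n
  induction n with
  | zero =>
    intro L L' s hlen hC _ _ hC' _ hnr'
    have hL : L = [] := List.length_eq_zero_iff.mp (Nat.le_zero.mp hlen)
    subst hL
    cases hC
    by_cases hL' : L' = []
    · exact hL'.symm
    · exact absurd rfl (hnr' L' [] (init M) (List.append_nil L').symm hL' hC')
  | succ n ih =>
    intro L L' s hlen hC hnl hnr hC' hnl' hnr'
    by_cases hL : L = []
    · subst hL
      cases hC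
      by_cases hL' : L' = []
      · exact hL'.symm
      · exact absurd rfl (hnr' L' [] (init M) (List.append_nil L').symm hL' hC')
    by_cases hL' : L' = []
    · subst hL'
      cases hC'
      exact absurd rfl (hnr L [] (init M) (List.append_nil L).symm hL hC)
    obtain ⟨C, α, hCa⟩ := (List.eq_nil_or_concat L).resolve_left hL
    obtain ⟨C', α', hCa'⟩ := (List.eq_nil_or_concat L').resolve_left hL'
    rw [List.concat_eq_append] at hCa hCa'
    subst hCa; subst hCa'
    obtain ⟨u, hCu, hstep⟩ := chain_concat.mp hC
    obtain ⟨u', hCu', hstep'⟩ := chain_concat.mp hC'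
    have huS := chain_inS init_inS hCu
    have huS' := chain_inS init_inS hCu'
    have hα : α ≠ Act.Nl := fun h =>
      hnl (List.mem_append_right _ (by rw [h]; exact List.mem_singleton_self _))
    have hα' : α' ≠ Act.Nl := fun h =>
      hnl' (List.mem_append_right _ (by rw [h]; exact List.mem_singleton_self _))
    obtain ⟨he1, he2⟩ := pred_unique hM hstep hα huS.1
    obtain ⟨he1', he2'⟩ := pred_unique hM hstep' hα' huS'.1
    have huu : u = u' := he1.trans he1'.symm
    have haa : α = α' := he2.trans he2'.symm
    have hCC : C = C' :=
      ih C C' u (by simp only [List.length_append, List.length_singleton] at hlen; omega)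
        hCu (fun h => hnl (List.mem_append_left _ h)) (noRevisit_prefix hnr)
        (huu ▸ hCu') (fun h => hnl' (List.mem_append_left _ h))
        (noRevisit_prefix hnr')
    rw [hCC, haa]

end BDM


open BDM in
/-- For every BDM state `s ∈ S` there is exactly one finite path of
feasible transitions from `s₀` to `s` avoiding actions of type `N_<` and visiting
`s₀` only as its first state.  Since each pair (state, action) determines the next
state, a path from `s₀` is faithfully encoded by its list of actions. -/
theorem bdm_unique_path_from_init (M q : ℕ) (hM : 1 ≤ M) (hq : 2 ≤ q)
    (s : St M) (hs : inS s) :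
    ∃! L : List Act,
      Chain (init M) L s ∧ Act.Nl ∉ L ∧
        (∀ L₁ L₂ (u : St M), L = L₁ ++ L₂ → L₁ ≠ [] →
          Chain (init M) L₁ u → u ≠ init M) := by
  obtain ⟨L, hchain, hnl, hnr⟩ :=
    exists_good hM (Phi s).toNat s hs (Int.self_le_toNat _)
  refine ⟨L, ⟨hchain, hnl, hnr⟩, ?_⟩
  rintro L' ⟨hc', hnl', hnr'⟩
  exact chain_unique hM L'.length L' L s (le_refl _) hc' hnl' hnr' hchain hnl hnr
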